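/- Let T be the d-regular rooted tree, D ≥ 1, and P ≤ Aut(T^D) a subgroup. Then P is a minimal pattern subgroup (i.e. π_D(G_P) = P) if and only if P is closed under patterns of itself, i.e. for every p ∈ P and every level-one vertex x, the section p|_x ∈ Aut(T^{D−1}) lies in π_{D−1}(P). -/

import Mathlib

namespace TreeFT

/-- Vertices of the `d`-regular rooted tree: finite words over `Fin d`. -/
abbrev Vertex (d : ℕ) := List (Fin d)

/-- The automorphism group of the `d`-regular rooted tree, realized as the subgroup of
permutations of the vertex set that preserve length (levels) and prefixes (adjacency). -/
def treeAut (d : ℕ) : Subgroup (Equiv.Perm (Vertex d)) where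
  carrier := {g | (∀ v : Vertex d, (g v).length = v.length) ∧
      (∀ v w : Vertex d, (g (v ++ w)).take v.length = g v)}
  one_mem' := ⟨fun _ => rfl, fun v w => List.take_left⟩
  mul_mem' := by
    rintro g h ⟨hg1, hg2⟩ ⟨hh1, hh2⟩
    refine ⟨fun v => by rw [Equiv.Perm.mul_apply, hg1, hh1], fun v w => ?_⟩
    have h1 : h (v ++ w) = h v ++ (h (v ++ w)).drop v.length := by
      conv_lhs => rw [← List.take_append_drop v.length (h (v ++ w))]
      rw [hh2]
    rw [Equiv.Perm.mul_apply, Equiv.Perm.mul_apply, h1]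
    have h2 : v.length = (h v).length := (hh1 v).symm
    rw [h2]
    exact hg2 _ _
  inv_mem' := by
    rintro g ⟨hg1, hg2⟩
    constructor
    · intro v
      have h := hg1 (g⁻¹ v)
      rw [← Equiv.Perm.mul_apply, mul_inv_cancel, Equiv.Perm.one_apply] at h
      exact h.symm
    · intro v w
      apply g.injective
      have hlen : v.length ≤ (g⁻¹ (v ++ w)).length := by
        have h := hg1 (g⁻¹ (v ++ w))
        rw [← Equiv.Perm.mul_apply, mul_inv_cancel, Equiv.Perm.one_apply] at h
        rw [← h, List.length_append]
        exact Nat.le_add_right _ _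
      have h3 := hg2 ((g⁻¹ (v ++ w)).take v.length) ((g⁻¹ (v ++ w)).drop v.length)
      rw [List.take_append_drop, ← Equiv.Perm.mul_apply, mul_inv_cancel, Equiv.Perm.one_apply, List.length_take,
        min_eq_left hlen, List.take_left] at h3
      rw [← h3, ← Equiv.Perm.mul_apply, mul_inv_cancel, Equiv.Perm.one_apply]

variable {d : ℕ}

/-- `Aut(T)` as a type. -/
abbrev TAut (d : ℕ) := ↥(treeAut d)

lemma length_apply (g : TAut d) (v : Vertex d) :
    ((g : Equiv.Perm (Vertex d)) v).length = v.length := g.2.1 v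

lemma take_apply (g : TAut d) (v w : Vertex d) :
    ((g : Equiv.Perm (Vertex d)) (v ++ w)).take v.length = (g : Equiv.Perm (Vertex d)) v :=
  g.2.2 v w

lemma apply_append (g : TAut d) (v w : Vertex d) :
    (g : Equiv.Perm (Vertex d)) (v ++ w) =
      (g : Equiv.Perm (Vertex d)) v ++ ((g : Equiv.Perm (Vertex d)) (v ++ w)).drop v.length := by
  conv_lhs => rw [← List.take_append_drop v.length ((g : Equiv.Perm (Vertex d)) (v ++ w))]
  rw [take_apply]

/-- The section `g|_v` of a tree automorphism at the vertex `v`. -/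
def sect (g : TAut d) (v : Vertex d) : TAut d :=
  ⟨{ toFun := fun w => ((g : Equiv.Perm (Vertex d)) (v ++ w)).drop v.length
     invFun := fun w =>
       (((g : Equiv.Perm (Vertex d)))⁻¹ ((g : Equiv.Perm (Vertex d)) v ++ w)).drop v.length
     left_inv := by
       intro w
       show ((g : Equiv.Perm (Vertex d))⁻¹
         ((g : Equiv.Perm (Vertex d)) v ++
           ((g : Equiv.Perm (Vertex d)) (v ++ w)).drop v.length)).drop v.length = w
       rw [← apply_append g v w, ← Equiv.Perm.mul_apply, inv_mul_cancel, Equiv.Perm.one_apply, List.drop_left]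
     right_inv := by
       intro w
       show ((g : Equiv.Perm (Vertex d))
         (v ++ ((g : Equiv.Perm (Vertex d))⁻¹
           ((g : Equiv.Perm (Vertex d)) v ++ w)).drop v.length)).drop v.length = w
       have h2 := apply_append g⁻¹ ((g : Equiv.Perm (Vertex d)) v) w
       simp only [InvMemClass.coe_inv] at h2
       rw [← Equiv.Perm.mul_apply, inv_mul_cancel, Equiv.Perm.one_apply, length_apply] at h2
       rw [← h2, ← Equiv.Perm.mul_apply, mul_inv_cancel, Equiv.Perm.one_apply, ← length_apply g v, List.drop_left] },
   by
    constructor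
    · intro w
      simp only [Equiv.coe_fn_mk, List.length_drop, length_apply, List.length_append]
      omega
    · intro w u
      simp only [Equiv.coe_fn_mk]
      rw [← List.append_assoc]
      have h0 : ((g : Equiv.Perm (Vertex d)) ((v ++ w) ++ u)).take (v ++ w).length
          = (g : Equiv.Perm (Vertex d)) (v ++ w) := take_apply g (v ++ w) u
      have h1 : w.length = (v.length + w.length) - v.length := by omega
      rw [h1, ← List.drop_take, ← List.length_append, h0]⟩

lemma sect_apply (g : TAut d) (v w : Vertex d) :
    ((sect g v : TAut d) : Equiv.Perm (Vertex d)) w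
      = ((g : Equiv.Perm (Vertex d)) (v ++ w)).drop v.length := rfl

lemma sect_mul (g h : TAut d) (v : Vertex d) :
    sect (g * h) v = sect g ((h : Equiv.Perm (Vertex d)) v) * sect h v := by
  apply Subtype.ext
  apply Equiv.ext
  intro w
  simp only [MulMemClass.coe_mul, Equiv.Perm.mul_apply, sect_apply]
  rw [← apply_append h v w, length_apply]

lemma sect_one (v : Vertex d) : sect (1 : TAut d) v = 1 := by
  apply Subtype.ext
  apply Equiv.ext
  intro w
  simp only [sect_apply, OneMemClass.coe_one, Equiv.Perm.coe_one, id_eq]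
  exact List.drop_left

end TreeFT
namespace TreeFT

variable {d : ℕ}

/-- The stabilizer `St(n)` of the `n`-th level: automorphisms acting trivially on the first
`n` levels of the tree. -/
def lst (d n : ℕ) : Subgroup (TAut d) where
  carrier := {g | ∀ v : Vertex d, v.length ≤ n → (g : Equiv.Perm (Vertex d)) v = v}
  one_mem' := fun _ _ => rfl
  mul_mem' := by
    intro g h hg hh v hv
    show (g : Equiv.Perm (Vertex d)) ((h : Equiv.Perm (Vertex d)) v) = v
    rw [hh v hv, hg v hv]
  inv_mem' := by
    intro g hg v hv
    show ((g : Equiv.Perm (Vertex d)))⁻¹ v = v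
    apply (g : Equiv.Perm (Vertex d)).injective
    rw [← Equiv.Perm.mul_apply, mul_inv_cancel, Equiv.Perm.one_apply, hg v hv]

lemma mem_lst {g : TAut d} {n : ℕ} :
    g ∈ lst d n ↔ ∀ v : Vertex d, v.length ≤ n → (g : Equiv.Perm (Vertex d)) v = v :=
  Iff.rfl

instance lst_normal (d n : ℕ) : (lst d n).Normal := by
  constructor
  intro s hs g v hv
  show (g : Equiv.Perm (Vertex d))
    ((s : Equiv.Perm (Vertex d)) (((g : Equiv.Perm (Vertex d)))⁻¹ v)) = v
  have h1 : ((g⁻¹ : TAut d) : Equiv.Perm (Vertex d)) v = ((g : Equiv.Perm (Vertex d)))⁻¹ v := by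
    simp
  have h2 : (((g : Equiv.Perm (Vertex d)))⁻¹ v).length ≤ n := by
    rw [← h1, length_apply]; exact hv
  rw [hs _ h2, ← Equiv.Perm.mul_apply, mul_inv_cancel, Equiv.Perm.one_apply]

/-- `Aut(T^n)`, the automorphism group of the finite tree consisting of the first `n` levels,
realized as the quotient of `Aut(T)` by the `n`-th level stabilizer. -/
abbrev FAut (d n : ℕ) := TAut d ⧸ lst d n

/-- `π_n : Aut(T) → Aut(T^n)`, restriction to the first `n` levels. -/
def proj (d n : ℕ) : TAut d →* FAut d n := QuotientGroup.mk' (lst d n)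

lemma proj_surjective (d n : ℕ) : Function.Surjective (proj d n) :=
  QuotientGroup.mk'_surjective _

/-- The group of finite type `G_P` of depth `D` with pattern group `P ≤ Aut(T^D)`:
all tree automorphisms whose section at every vertex acts on the first `D` levels as an
element of `P`. -/
def gft (d D : ℕ) (P : Subgroup (FAut d D)) : Subgroup (TAut d) where
  carrier := {g | ∀ v : Vertex d, proj d D (sect g v) ∈ P}
  one_mem' := by
    intro v
    rw [sect_one, map_one]
    exact one_mem P
  mul_mem' := by
    intro g h hg hh v
    rw [sect_mul, map_mul]
    exact mul_mem (hg _) (hh _)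
  inv_mem' := by
    intro g hg v
    have h2 : sect g (((g⁻¹ : TAut d) : Equiv.Perm (Vertex d)) v) * sect g⁻¹ v = 1 := by
      rw [← sect_mul, mul_inv_cancel, sect_one]
    have h3 : sect g⁻¹ v = (sect g (((g⁻¹ : TAut d) : Equiv.Perm (Vertex d)) v))⁻¹ :=
      (inv_eq_of_mul_eq_one_right h2).symm
    rw [h3, map_inv]
    exact inv_mem (hg _)

lemma mem_gft {g : TAut d} {D : ℕ} {P : Subgroup (FAut d D)} :
    g ∈ gft d D P ↔ ∀ v : Vertex d, proj d D (sect g v) ∈ P := Iff.rfl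

/-- `P ≤ Aut(T^D)` is a minimal pattern subgroup if `π_D(G_P) = P`. -/
def IsMinimalPattern (d D : ℕ) (P : Subgroup (FAut d D)) : Prop :=
  (gft d D P).map (proj d D) = P

/-- A subgroup of `Aut(T)` is level-transitive if it acts transitively on every level. -/
def LevelTransitive (H : Subgroup (TAut d)) : Prop :=
  ∀ v w : Vertex d, v.length = w.length → ∃ g ∈ H, (g : Equiv.Perm (Vertex d)) v = w

/-- A subgroup of `Aut(T)` is self-similar if it contains all sections of its elements. -/
def SelfSimilar (H : Subgroup (TAut d)) : Prop :=
  ∀ g ∈ H, ∀ v : Vertex d, sect g v ∈ H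

/-- A subgroup of `Aut(T)` is fractal if it is self-similar, level-transitive, and for every
vertex `v` the section map maps the stabilizer of `v` onto the whole group. -/
def Fractal (H : Subgroup (TAut d)) : Prop :=
  SelfSimilar H ∧ LevelTransitive H ∧
    ∀ v : Vertex d, ∀ h ∈ H, ∃ k ∈ H, (k : Equiv.Perm (Vertex d)) v = v ∧ sect k v = h

/-- The geometric product `K_n` of `K` at level `n`: elements of `St(n)` all of whose sections
at level-`n` vertices lie in `K`. -/
def geom (K : Subgroup (TAut d)) (n : ℕ) : Subgroup (TAut d) where
  carrier := {g | g ∈ lst d n ∧ ∀ v : Vertex d, v.length = n → sect g v ∈ K}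
  one_mem' := ⟨one_mem _, fun v _ => by rw [sect_one]; exact one_mem K⟩
  mul_mem' := by
    rintro g h ⟨hg1, hg2⟩ ⟨hh1, hh2⟩
    refine ⟨mul_mem hg1 hh1, fun v hv => ?_⟩
    rw [sect_mul, hh1 v hv.le]
    exact mul_mem (hg2 v hv) (hh2 v hv)
  inv_mem' := by
    rintro g ⟨hg1, hg2⟩
    refine ⟨inv_mem hg1, fun v hv => ?_⟩
    have hfix : ((g⁻¹ : TAut d) : Equiv.Perm (Vertex d)) v = v :=
      (inv_mem hg1 : g⁻¹ ∈ lst d n) v hv.le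
    have h2 : sect g v * sect g⁻¹ v = 1 := by
      have := sect_mul g g⁻¹ v
      rw [mul_inv_cancel, sect_one, hfix] at this
      exact this.symm
    rw [(inv_eq_of_mul_eq_one_right h2).symm]
    exact inv_mem (hg2 v hv)

end TreeFT
namespace TreeFT

variable {d : ℕ}

/-- The congruence topology on `Aut(T)`: the topology of pointwise convergence on the vertex
set (each vertex set carrying the discrete topology); the level stabilizers `St(n)` form a
base of neighborhoods of the identity for it. -/
instance tautTopologicalSpace (d : ℕ) : TopologicalSpace (TAut d) :=
  TopologicalSpace.induced
    (fun g : TAut d => ((g : Equiv.Perm (Vertex d)) : Vertex d → Vertex d))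
    (@Pi.topologicalSpace (Vertex d) (fun _ => Vertex d) (fun _ => ⊥))

lemma isOpen_eval (d : ℕ) (v u : Vertex d) :
    IsOpen {g : TAut d | (g : Equiv.Perm (Vertex d)) v = u} := by
  letI : TopologicalSpace (Vertex d) := ⊥
  haveI : DiscreteTopology (Vertex d) := ⟨rfl⟩
  have h : IsOpen ((fun f : Vertex d → Vertex d => f v) ⁻¹' {u}) :=
    (isOpen_discrete ({u} : Set (Vertex d))).preimage (continuous_apply v)
  exact isOpen_induced h

lemma isOpen_eval_mem (d : ℕ) (v : Vertex d) (s : Set (Vertex d)) :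
    IsOpen {g : TAut d | (g : Equiv.Perm (Vertex d)) v ∈ s} := by
  have h : {g : TAut d | (g : Equiv.Perm (Vertex d)) v ∈ s}
      = ⋃ u ∈ s, {g : TAut d | (g : Equiv.Perm (Vertex d)) v = u} := by
    ext g; simp
  rw [h]
  exact isOpen_biUnion fun u _ => isOpen_eval d v u

lemma continuous_into_vertex {X : Type*} [TopologicalSpace X] (f : X → Vertex d)
    (h : ∀ u : Vertex d, IsOpen (f ⁻¹' {u})) :
    @Continuous X (Vertex d) _ ⊥ f := by
  rw [continuous_def]
  intro s _
  have hs : f ⁻¹' s = ⋃ u ∈ s, f ⁻¹' {u} := by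
    ext x; simp
  rw [hs]
  exact isOpen_biUnion fun u _ => h u

instance tautContinuousMul (d : ℕ) : ContinuousMul (TAut d) := by
  constructor
  · -- continuity of multiplication
    apply continuous_induced_rng.2
    apply @continuous_pi _ _ _ _ (fun _ => (⊥ : TopologicalSpace (Vertex d)))
    intro v
    apply continuous_into_vertex
      (f := fun p : TAut d × TAut d => ((p.1 * p.2 : TAut d) : Equiv.Perm (Vertex d)) v)
    intro u
    have h : (fun p : TAut d × TAut d =>
          ((p.1 * p.2 : TAut d) : Equiv.Perm (Vertex d)) v) ⁻¹' {u}
        = ⋃ w : Vertex d, ({g : TAut d | (g : Equiv.Perm (Vertex d)) w = u} ×ˢ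
            {h : TAut d | (h : Equiv.Perm (Vertex d)) v = w}) := by
      ext p
      simp only [Set.mem_preimage, Set.mem_singleton_iff, Set.mem_iUnion, Set.mem_prod,
        Set.mem_setOf_eq]
      constructor
      · intro hp
        exact ⟨(p.2 : Equiv.Perm (Vertex d)) v, hp, rfl⟩
      · rintro ⟨w, hw1, hw2⟩
        show (p.1 : Equiv.Perm (Vertex d)) ((p.2 : Equiv.Perm (Vertex d)) v) = u
        rw [hw2]; exact hw1
    rw [h]
    exact isOpen_iUnion fun w => (isOpen_eval d w u).prod (isOpen_eval d v w)

instance tautContinuousInv (d : ℕ) : ContinuousInv (TAut d) := by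
  constructor
  · -- continuity of inversion
    apply continuous_induced_rng.2
    apply @continuous_pi _ _ _ _ (fun _ => (⊥ : TopologicalSpace (Vertex d)))
    intro v
    apply continuous_into_vertex
      (f := fun g : TAut d => ((g⁻¹ : TAut d) : Equiv.Perm (Vertex d)) v)
    intro u
    have h : (fun g : TAut d => ((g⁻¹ : TAut d) : Equiv.Perm (Vertex d)) v) ⁻¹' {u}
        = {g : TAut d | (g : Equiv.Perm (Vertex d)) u = v} := by
      ext g
      simp only [Set.mem_preimage, Set.mem_singleton_iff, Set.mem_setOf_eq,
        InvMemClass.coe_inv]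
      constructor
      · intro hg; rw [← hg, ← Equiv.Perm.mul_apply, mul_inv_cancel, Equiv.Perm.one_apply]
      · intro hg; rw [← hg, ← Equiv.Perm.mul_apply, inv_mul_cancel, Equiv.Perm.one_apply]
    rw [h]
    exact isOpen_eval d u v

instance tautTopologicalGroup (d : ℕ) : IsTopologicalGroup (TAut d) := ⟨⟩

/-- A subgroup of `Aut(T)` (viewed as a topological group with the congruence topology) is
topologically finitely generated if it contains a finitely generated dense subgroup. -/
def TopFG (H : Subgroup (TAut d)) : Prop :=
  ∃ S : Set ↥H, S.Finite ∧ Dense ((Subgroup.closure S : Subgroup ↥H) : Set ↥H)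

/-- A profinite group is just-infinite if it is infinite and every nontrivial closed normal
subgroup has finite index. -/
def JustInfinite (H : Subgroup (TAut d)) : Prop :=
  Infinite ↥H ∧ ∀ N : Subgroup ↥H, N.Normal → IsClosed (N : Set ↥H) → N ≠ ⊥ → N.index ≠ 0

/-- A profinite group is strongly complete if every subgroup of finite index is open. -/
def StronglyComplete (H : Subgroup (TAut d)) : Prop :=
  ∀ N : Subgroup ↥H, N.index ≠ 0 → IsOpen (N : Set ↥H)

end TreeFT

namespace TreeFT

/-- The natural restriction map `Aut(T^n) → Aut(T^m)` for `m ≤ n`. -/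
def levelProj (d : ℕ) {m n : ℕ} (h : m ≤ n) : FAut d n →* FAut d m :=
  QuotientGroup.map (lst d n) (lst d m) (MonoidHom.id _) (by
    intro g hg
    rw [Subgroup.mem_comap]
    intro v hv
    exact hg v (hv.trans h))

/-!
The inclusion `π_D(G_P) ≤ P` always holds: look at the section of `g ∈ G_P` at the root. If
`π_D(G_P) = P`, a lift `g ∈ G_P` of `p ∈ P` has `p|_x = π_{D-1}(g|_x)`, the restriction of the
pattern `π_D(g|_x) ∈ P`. Conversely, if `P` is closed under patterns, lift `p` to `r_∅` and, going
down the tree, pick for each child `vx` an `r_{vx}` with `π_D(r_{vx}) ∈ P` that agrees with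
`r_v|_x` on `D - 1` levels. The automorphism whose portrait at `v` is the root permutation of
`r_v` then agrees with `r_v` on the first `D` levels below every `v`, so it lies in `G_P` and
restricts to `p`.
-/

variable {d : ℕ}

lemma taut_ext {g h : TAut d}
    (hgh : ∀ w, (g : Equiv.Perm (Vertex d)) w = (h : Equiv.Perm (Vertex d)) w) : g = h :=
  Subtype.ext (Equiv.ext hgh)

lemma apply_nil (g : TAut d) : (g : Equiv.Perm (Vertex d)) [] = [] :=
  List.eq_nil_of_length_eq_zero (length_apply g [])

lemma sect_nil (g : TAut d) : sect g [] = g :=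
  taut_ext fun w => by simp [sect_apply]

lemma proj_eq_proj_iff {n : ℕ} {g h : TAut d} :
    proj d n g = proj d n h ↔ ∀ u : Vertex d, u.length ≤ n →
      (g : Equiv.Perm (Vertex d)) u = (h : Equiv.Perm (Vertex d)) u := by
  rw [proj, QuotientGroup.mk'_apply, QuotientGroup.mk'_apply, QuotientGroup.eq, mem_lst]
  refine forall₂_congr fun u _ => ?_
  simp only [MulMemClass.coe_mul, InvMemClass.coe_inv, Equiv.Perm.mul_apply,
    Equiv.Perm.eq_inv_iff_eq, eq_comm]

lemma levelProj_proj {m n : ℕ} (h : m ≤ n) (g : TAut d) :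
    levelProj d h (proj d n g) = proj d m g := rfl

lemma proj_sect_eq_proj_sect {m n : ℕ} {g h : TAut d} (v : Vertex d) (hmn : v.length + n ≤ m)
    (hgh : proj d m g = proj d m h) : proj d n (sect g v) = proj d n (sect h v) := by
  rw [proj_eq_proj_iff] at hgh ⊢
  intro u hu
  rw [sect_apply, sect_apply, hgh (v ++ u) (by simp; omega)]

lemma apply_singleton_eq (g : TAut d) (x : Fin d) :
    (g : Equiv.Perm (Vertex d)) [x] = [((g : Equiv.Perm (Vertex d)) [x]).headD x] := by
  obtain ⟨y, hy⟩ := List.length_eq_one_iff.mp (length_apply g [x])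
  simp [hy]

def rootPerm (g : TAut d) : Equiv.Perm (Fin d) where
  toFun x := ((g : Equiv.Perm (Vertex d)) [x]).headD x
  invFun x := (((g⁻¹ : TAut d) : Equiv.Perm (Vertex d)) [x]).headD x
  left_inv x := by
    dsimp only
    rw [← apply_singleton_eq g x, InvMemClass.coe_inv, Equiv.Perm.coe_inv, Equiv.symm_apply_apply]
    rfl
  right_inv x := by
    dsimp only
    rw [← apply_singleton_eq g⁻¹ x, InvMemClass.coe_inv, Equiv.Perm.coe_inv, Equiv.apply_symm_apply]
    rfl

lemma apply_singleton (g : TAut d) (x : Fin d) :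
    (g : Equiv.Perm (Vertex d)) [x] = [rootPerm g x] :=
  apply_singleton_eq g x

lemma apply_cons (g : TAut d) (x : Fin d) (w : Vertex d) :
    (g : Equiv.Perm (Vertex d)) (x :: w) =
      rootPerm g x :: ((sect g [x] : TAut d) : Equiv.Perm (Vertex d)) w := by
  show (g : Equiv.Perm (Vertex d)) ([x] ++ w) = _
  rw [apply_append, apply_singleton, sect_apply]
  rfl

def portraitApply : (Vertex d → Equiv.Perm (Fin d)) → Vertex d → Vertex d
  | _, [] => []
  | σ, x :: w => σ [] x :: portraitApply (fun u => σ (x :: u)) w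

def portraitApplyInv : (Vertex d → Equiv.Perm (Fin d)) → Vertex d → Vertex d
  | _, [] => []
  | σ, y :: w => (σ [])⁻¹ y :: portraitApplyInv (fun u => σ ((σ [])⁻¹ y :: u)) w

lemma portraitApplyInv_portraitApply (σ : Vertex d → Equiv.Perm (Fin d)) (w : Vertex d) :
    portraitApplyInv σ (portraitApply σ w) = w := by
  induction w generalizing σ with
  | nil => rfl
  | cons x w ih => simp [portraitApply, portraitApplyInv, ih]

lemma portraitApply_portraitApplyInv (σ : Vertex d → Equiv.Perm (Fin d)) (w : Vertex d) :
    portraitApply σ (portraitApplyInv σ w) = w := by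
  induction w generalizing σ with
  | nil => rfl
  | cons y w ih => simp [portraitApply, portraitApplyInv, ih]

lemma length_portraitApply (σ : Vertex d → Equiv.Perm (Fin d)) (w : Vertex d) :
    (portraitApply σ w).length = w.length := by
  induction w generalizing σ with
  | nil => rfl
  | cons x w ih => simp [portraitApply, ih]

lemma portraitApply_append (σ : Vertex d → Equiv.Perm (Fin d)) (v w : Vertex d) :
    portraitApply σ (v ++ w) = portraitApply σ v ++ portraitApply (fun u => σ (v ++ u)) w := by
  induction v generalizing σ with
  | nil => rfl
  | cons x v ih => simp [portraitApply, ih]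

/-- The automorphism that permutes the children of each vertex `v` by `σ v`. -/
def ofPortrait (σ : Vertex d → Equiv.Perm (Fin d)) : TAut d :=
  ⟨⟨portraitApply σ, portraitApplyInv σ, portraitApplyInv_portraitApply σ,
      portraitApply_portraitApplyInv σ⟩,
    length_portraitApply σ, fun v w => by
      simp [portraitApply_append, ← length_portraitApply σ v]⟩

lemma ofPortrait_apply (σ : Vertex d → Equiv.Perm (Fin d)) (w : Vertex d) :
    ((ofPortrait σ : TAut d) : Equiv.Perm (Vertex d)) w = portraitApply σ w := rfl

lemma sect_ofPortrait (σ : Vertex d → Equiv.Perm (Fin d)) (v : Vertex d) :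
    sect (ofPortrait σ) v = ofPortrait fun u => σ (v ++ u) :=
  taut_ext fun w => by
    simp [sect_apply, ofPortrait_apply, portraitApply_append, ← length_portraitApply σ v]

section Gluing

variable {α : Type*} (f : α → TAut d) (step : α → Fin d → α)

lemma proj_ofPortrait_rootPerm_foldl {n : ℕ}
    (hstep : ∀ a x, proj d n (f (step a x)) = proj d n (sect (f a) [x])) (a : α) :
    proj d (n + 1) (ofPortrait fun v => rootPerm (f (v.foldl step a))) = proj d (n + 1) (f a) := by
  rw [proj_eq_proj_iff]
  intro w hw
  induction w generalizing a with
  | nil => rw [apply_nil, apply_nil]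
  | cons x w ih =>
    have hwn : w.length ≤ n := by simpa using hw
    rw [ofPortrait_apply, apply_cons, ← proj_eq_proj_iff.mp (hstep a x) w hwn,
      ← ih (step a x) (by omega)]
    rfl

theorem exists_proj_sect_eq_proj_foldl {n : ℕ}
    (hstep : ∀ a x, proj d n (f (step a x)) = proj d n (sect (f a) [x])) (a : α) :
    ∃ g : TAut d, ∀ v : Vertex d,
      proj d (n + 1) (sect g v) = proj d (n + 1) (f (v.foldl step a)) :=
  ⟨ofPortrait fun v => rootPerm (f (v.foldl step a)), fun v => by
    simp only [sect_ofPortrait, List.foldl_append]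
    exact proj_ofPortrait_rootPerm_foldl f step hstep _⟩

end Gluing

def ClosedUnderPatterns {D : ℕ} (K H : Subgroup (FAut d D)) : Prop :=
  ∀ g : TAut d, proj d D g ∈ K → ∀ x : Fin d,
    proj d (D - 1) (sect g [x]) ∈ H.map (levelProj d (Nat.sub_le D 1))

lemma map_proj_gft_le {D : ℕ} (P : Subgroup (FAut d D)) : (gft d D P).map (proj d D) ≤ P := by
  rintro _ ⟨g, hg, rfl⟩
  simpa [sect_nil] using hg []

lemma closedUnderPatterns_map_proj_gft {D : ℕ} (hD : 1 ≤ D) (P : Subgroup (FAut d D)) :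
    ClosedUnderPatterns ((gft d D P).map (proj d D)) P := by
  rintro g ⟨h, hh, hgh⟩ x
  rw [proj_sect_eq_proj_sect [x] (by simp; omega) hgh.symm]
  exact ⟨proj d D (sect h [x]), hh [x], levelProj_proj _ _⟩

lemma ClosedUnderPatterns.le_map_proj_gft {D : ℕ} (hD : 1 ≤ D) {P : Subgroup (FAut d D)}
    (hP : ClosedUnderPatterns P P) : P ≤ (gft d D P).map (proj d D) := by
  obtain ⟨n, rfl⟩ : ∃ n, D = n + 1 := ⟨D - 1, by omega⟩
  have hstep : ∀ (s : {g : TAut d // proj d (n + 1) g ∈ P}) (x : Fin d),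
      ∃ t : {g : TAut d // proj d (n + 1) g ∈ P}, proj d n t.1 = proj d n (sect s.1 [x]) := by
    intro s x
    obtain ⟨q, hq, hqx⟩ := hP s.1 s.2 x
    obtain ⟨t, rfl⟩ := proj_surjective d (n + 1) q
    exact ⟨⟨t, hq⟩, hqx⟩
  choose step hstep using hstep
  intro p hp
  obtain ⟨s, rfl⟩ := proj_surjective d (n + 1) p
  obtain ⟨g, hg⟩ := exists_proj_sect_eq_proj_foldl Subtype.val step hstep ⟨s, hp⟩
  refine ⟨g, fun v => hg v ▸ (v.foldl step ⟨s, hp⟩).2, ?_⟩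
  simpa [sect_nil] using hg []

/-- A subgroup `P ≤ Aut(T^D)` is a minimal pattern subgroup
(`π_D(G_P) = P`) if and only if it is closed under patterns of itself: for every `p ∈ P` and
every level-one vertex `x`, the section `p|_x ∈ Aut(T^{D−1})` lies in `π_{D−1}(P)`. -/
theorem statement_14 (d D : ℕ) (hD : 1 ≤ D) (P : Subgroup (FAut d D)) :
    IsMinimalPattern d D P ↔
      ∀ g : TAut d, proj d D g ∈ P → ∀ x : Fin d,
        proj d (D - 1) (sect g [x]) ∈ P.map (levelProj d (Nat.sub_le D 1)) := by
  change IsMinimalPattern d D P ↔ ClosedUnderPatterns P P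
  refine ⟨fun hmin => ?_, fun hP => le_antisymm (map_proj_gft_le P) (hP.le_map_proj_gft hD)⟩
  unfold IsMinimalPattern at hmin
  simpa only [hmin] using closedUnderPatterns_map_proj_gft hD P

end TreeFT
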